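/- arXiv:2401.04306 — 4 statements merged into one kernel-verified Lean document; each statement's English description precedes it below -/
import Mathlib

section
/- Let n ≥ 1, p ∈ (0,1], C ~ Binomial(n-1, p), and conditionally on C, A ~ Binomial(C, 1/2). Define distributions on pairs of natural numbers: P is the law of (A, C-A+1) and Q is the law of (A+1, C-A). Then for any pair (a,b) with a ≥ 1 and b ≥ 1, the likelihood ratio satisfies ℙ(Q=(a,b)) / ℙ(P=(a,b)) = a/b (whenever ℙ(P=(a,b)) > 0). -/
open Real

/-- Binomial pmf: probability that a `Binomial(N, q)` variable equals `k`. -/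
noncomputable def binPMF (N : ℕ) (q : ℝ) (k : ℕ) : ℝ :=
  if k ≤ N then (N.choose k : ℝ) * q ^ k * (1 - q) ^ (N - k) else 0

/-- `ℙ(P = (a,b))` where `P = (A, C - A + 1)`, `C ~ Bin(n-1,p)`, `A | C ~ Bin(C, 1/2)`:
the event is `C = a + b - 1, A = a`. -/
noncomputable def pmfP (n : ℕ) (p : ℝ) (a b : ℕ) : ℝ :=
  binPMF (n - 1) p (a + b - 1) * binPMF (a + b - 1) (1/2) a

/-- `ℙ(Q = (a,b))` where `Q = (A + 1, C - A)`: the event is `C = a + b - 1, A = a - 1`. -/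
noncomputable def pmfQ (n : ℕ) (p : ℝ) (a b : ℕ) : ℝ :=
  binPMF (n - 1) p (a + b - 1) * binPMF (a + b - 1) (1/2) (a - 1)

/-! Both events force `C = a + b - 1`, so the factor `ℙ(C = a + b - 1)` cancels and the ratio is
that of two neighbouring `Bin(a + b - 1, 1/2)` probabilities. With `q = 1/2` every outcome has
weight `2^-(a+b-1)`, leaving `choose (a+b-1) (a-1) / choose (a+b-1) a = a / b`. -/

lemma binPMF_half {N k : ℕ} (hk : k ≤ N) : binPMF N (1 / 2) k = N.choose k / 2 ^ N := by
  rw [binPMF, if_pos hk, mul_assoc, show (1 : ℝ) - 1 / 2 = 1 / 2 by norm_num, ← pow_add,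
    Nat.add_sub_cancel' hk, one_div, inv_pow, div_eq_mul_inv]

lemma binPMF_half_div_succ (k : ℕ) {b : ℕ} (hb : 1 ≤ b) :
    binPMF (k + b) (1 / 2) k / binPMF (k + b) (1 / 2) (k + 1) = (k + 1 : ℝ) / b := by
  have hchoose : ((k + b).choose (k + 1) : ℝ) ≠ 0 := by
    exact_mod_cast (Nat.choose_pos (by omega)).ne'
  have hb' : (b : ℝ) ≠ 0 := by exact_mod_cast (by omega : b ≠ 0)
  rw [binPMF_half (by omega), binPMF_half (by omega), div_div_div_cancel_right₀ (by positivity),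
    div_eq_div_iff hchoose hb']
  have h := Nat.choose_succ_right_eq (k + b) k
  rw [Nat.add_sub_cancel_left] at h
  rw [mul_comm ((k : ℝ) + 1)]
  exact_mod_cast h.symm

theorem likelihood_ratio_shuffle_general (n : ℕ) (p : ℝ)
    (a b : ℕ) (ha : 1 ≤ a) (hb : 1 ≤ b) (hpos : 0 < pmfP n p a b) :
    pmfQ n p a b / pmfP n p a b = (a : ℝ) / b := by
  obtain ⟨k, rfl⟩ : ∃ k, a = k + 1 := ⟨a - 1, by omega⟩
  have hC : binPMF (n - 1) p (k + 1 + b - 1) ≠ 0 := left_ne_zero_of_mul hpos.ne'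
  rw [pmfQ, pmfP, mul_div_mul_left _ _ hC, Nat.add_sub_cancel, show k + 1 + b - 1 = k + b by omega,
    binPMF_half_div_succ k hb, Nat.cast_add_one]

theorem likelihood_ratio_shuffle (n : ℕ) (hn : 1 ≤ n) (p : ℝ) (hp : 0 < p) (hp1 : p ≤ 1)
    (a b : ℕ) (ha : 1 ≤ a) (hb : 1 ≤ b) (hpos : 0 < pmfP n p a b) :
    pmfQ n p a b / pmfP n p a b = (a : ℝ) / b :=
  likelihood_ratio_shuffle_general n p a b ha hb hpos
end

section
/- If a mechanism M is f-DP for a trade-off function f, then for any (measurable, possibly randomized) post-processing map Proc, the composed mechanism Proc ∘ M is also f-DP. Equivalently, for any two distributions U, V and any Markov kernel K, T(K∘U, K∘V)(α) ≥ T(U,V)(α) for all α ∈ [0,1]. -/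
open MeasureTheory ProbabilityTheory Set

noncomputable def tradeOff {Ω : Type*} [MeasurableSpace Ω] (U V : Measure Ω) (α : ℝ) : ℝ :=
  sInf { β : ℝ | ∃ φ : Ω → ℝ, Measurable φ ∧ (∀ x, 0 ≤ φ x ∧ φ x ≤ 1) ∧
    (∫ x, φ x ∂U) ≤ α ∧ β = 1 - ∫ x, φ x ∂V }

lemma integral_bind01 {Ω Ω' : Type*} [MeasurableSpace Ω] [MeasurableSpace Ω']
    (μ : Measure Ω) [IsProbabilityMeasure μ] (K : Kernel Ω Ω') [IsMarkovKernel K]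
    {φ : Ω' → ℝ} (hm : Measurable φ) (hb : ∀ x, 0 ≤ φ x ∧ φ x ≤ 1) :
    ∫ y, φ y ∂(μ.bind K) = ∫ x, ∫ y, φ y ∂(K x) ∂μ := by
  have hg : Measurable fun y => ENNReal.ofReal (φ y) := hm.ennreal_ofReal
  have key : ∫⁻ y, ENNReal.ofReal (φ y) ∂(μ.bind K)
      = ∫⁻ x, ∫⁻ y, ENNReal.ofReal (φ y) ∂(K x) ∂μ :=
    Measure.lintegral_bind K.measurable.aemeasurable hg.aemeasurable
  have hfin : ∀ x, ∫⁻ y, ENNReal.ofReal (φ y) ∂(K x) ≤ 1 := by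
    intro x
    calc ∫⁻ y, ENNReal.ofReal (φ y) ∂(K x) ≤ ∫⁻ _, 1 ∂(K x) :=
          lintegral_mono fun y => ENNReal.ofReal_le_one.mpr (hb y).2
      _ = 1 := by simp
  have hinner : ∀ x, ∫ y, φ y ∂(K x) = (∫⁻ y, ENNReal.ofReal (φ y) ∂(K x)).toReal := fun x =>
    integral_eq_lintegral_of_nonneg_ae (Filter.Eventually.of_forall fun y => (hb y).1)
      hm.aestronglyMeasurable
  have hTR : ∫ x, (∫⁻ y, ENNReal.ofReal (φ y) ∂(K x)).toReal ∂μ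
      = (∫⁻ x, ∫⁻ y, ENNReal.ofReal (φ y) ∂(K x) ∂μ).toReal :=
    integral_toReal hg.lintegral_kernel.aemeasurable
      (Filter.Eventually.of_forall fun x => lt_of_le_of_lt (hfin x) ENNReal.one_lt_top)
  rw [integral_eq_lintegral_of_nonneg_ae (Filter.Eventually.of_forall fun y => (hb y).1)
      hm.aestronglyMeasurable, key, ← hTR]
  exact integral_congr_ae (Filter.Eventually.of_forall fun x => hinner x) |>.symm

/-- Post-processing can only increase the trade-off function: for any Markov kernel `K`,
`T(K ∘ U, K ∘ V)(α) ≥ T(U, V)(α)`.  Consequently any `f`-DP mechanism remains `f`-DP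
after post-processing. -/
theorem tradeOff_postprocess {Ω Ω' : Type*} [MeasurableSpace Ω] [MeasurableSpace Ω']
    (U V : Measure Ω) [IsProbabilityMeasure U] [IsProbabilityMeasure V]
    (K : Kernel Ω Ω') [IsMarkovKernel K] :
    ∀ α ∈ Icc (0:ℝ) 1, tradeOff (U.bind K) (V.bind K) α ≥ tradeOff U V α := by
  intro α hα
  unfold tradeOff
  refine csInf_le_csInf ?_ ?_ ?_
  · -- bounded below by 0
    refine ⟨0, fun β hβ => ?_⟩
    obtain ⟨φ, hm, hb, _, rfl⟩ := hβ
    have h1 : ∫ x, φ x ∂V ≤ ∫ _, (1:ℝ) ∂V := by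
      refine integral_mono ?_ (integrable_const 1) fun x => (hb x).2
      refine (integrable_const (1:ℝ)).mono' hm.aestronglyMeasurable ?_
      filter_upwards with x
      rw [Real.norm_eq_abs, abs_of_nonneg (hb x).1]; exact (hb x).2
    simp only [integral_const, measure_univ, probReal_univ, ENNReal.toReal_one, one_smul, smul_eq_mul,
      mul_one] at h1
    linarith
  · -- nonempty: φ' = 0
    exact ⟨1, fun _ => 0, measurable_const, fun x => ⟨le_rfl, zero_le_one⟩,
      by simpa using hα.1, by simp⟩
  · -- subset
    rintro β ⟨φ', hm', hb', hU, rfl⟩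
    refine ⟨fun x => ∫ y, φ' y ∂(K x), ?_, ?_, ?_, ?_⟩
    · exact (StronglyMeasurable.integral_kernel_prod_right
        (f := fun _ y => φ' y) (hm'.comp measurable_snd).stronglyMeasurable).measurable
    · intro x
      constructor
      · exact integral_nonneg fun y => (hb' y).1
      · have h1 : ∫ y, φ' y ∂(K x) ≤ ∫ _, (1:ℝ) ∂(K x) := by
          refine integral_mono ?_ (integrable_const 1) fun y => (hb' y).2
          refine (integrable_const (1:ℝ)).mono' hm'.aestronglyMeasurable ?_
          filter_upwards with y
          rw [Real.norm_eq_abs, abs_of_nonneg (hb' y).1]; exact (hb' y).2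
        simpa using h1
    · rw [← integral_bind01 U K hm' hb']; exact hU
    · rw [← integral_bind01 V K hm' hb']
end

section
/- If a mechanism M is μ-GDP, then M is (λ, ½μ²λ)-Rényi differentially private for every λ > 1. Equivalently, the Rényi divergence of order λ between N(0,1) and N(μ,1) equals ½μ²λ: D^λ(N(μ,1) ‖ N(0,1)) = λμ²/2. -/
open MeasureTheory ProbabilityTheory
open scoped NNReal ENNReal

/-- Rényi divergence of order `l` between measures `U` and `V`:
`D^l(U‖V) = (1/(l-1)) log ∫ (dU/dV)^l dV`. -/
noncomputable def renyiDiv {Ω : Type*} [MeasurableSpace Ω] (l : ℝ) (U V : Measure Ω) : ℝ :=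
  (l - 1)⁻¹ * Real.log (∫ x, ((U.rnDeriv V x).toReal) ^ l ∂V)

lemma rnDeriv_gauss_gauss (μ : ℝ) :
    (fun x => (((gaussianReal μ 1).rnDeriv (gaussianReal 0 1) x).toReal))
      =ᵐ[volume] fun x => Real.exp (μ * x - μ ^ 2 / 2) := by
  have hV : gaussianReal 0 1 = volume.withDensity (gaussianPDF 0 1) :=
    gaussianReal_of_var_ne_zero 0 one_ne_zero
  have h1 : (gaussianReal μ 1).rnDeriv (gaussianReal 0 1)
      =ᵐ[volume] fun x => (gaussianPDF 0 1 x)⁻¹ * (gaussianReal μ 1).rnDeriv volume x := by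
    rw [hV]
    exact Measure.rnDeriv_withDensity_right _ _
      (measurable_gaussianPDF 0 1).aemeasurable
      (ae_of_all _ fun x => (gaussianPDF_pos 0 one_ne_zero x).ne')
      (ae_of_all _ fun x => ENNReal.ofReal_ne_top)
  have h2 := rnDeriv_gaussianReal μ 1
  filter_upwards [h1, h2] with x hx hx2
  rw [hx, hx2]
  have hpos0 : 0 < gaussianPDFReal 0 1 x := gaussianPDFReal_pos 0 1 x one_ne_zero
  have hposμ : 0 < gaussianPDFReal μ 1 x := gaussianPDFReal_pos μ 1 x one_ne_zero
  rw [gaussianPDF, gaussianPDF, ENNReal.toReal_mul, ENNReal.toReal_inv,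
    ENNReal.toReal_ofReal hpos0.le, ENNReal.toReal_ofReal hposμ.le]
  rw [gaussianPDFReal, gaussianPDFReal]
  have hsqrt : (0:ℝ) < Real.sqrt (2 * Real.pi * ((1:ℝ≥0) : ℝ)) := Real.sqrt_pos.2 (by
    norm_num
    exact Real.pi_pos)
  have : ((Real.sqrt (2 * Real.pi * ((1:ℝ≥0) : ℝ)))⁻¹ *
        Real.exp (-(x - 0) ^ 2 / (2 * ((1:ℝ≥0) : ℝ))))⁻¹ *
      ((Real.sqrt (2 * Real.pi * ((1:ℝ≥0) : ℝ)))⁻¹ *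
        Real.exp (-(x - μ) ^ 2 / (2 * ((1:ℝ≥0) : ℝ))))
      = Real.exp (-(x - μ) ^ 2 / (2 * ((1:ℝ≥0) : ℝ))) / Real.exp (-(x - 0) ^ 2 / (2 * ((1:ℝ≥0) : ℝ))) := by
    field_simp
  rw [this, ← Real.exp_sub]
  congr 1
  push_cast
  ring

/-- The Rényi divergence of order `l > 1` between `N(μ,1)` and `N(0,1)` is `l μ² / 2`;
hence a `μ`-GDP mechanism is `(l, ½ μ² l)`-RDP. -/
theorem renyiDiv_gaussian (μ : ℝ) (l : ℝ) (hl : 1 < l) :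
    renyiDiv l (gaussianReal μ 1) (gaussianReal 0 1) = l * μ ^ 2 / 2 := by
  have hVvol : gaussianReal 0 1 ≪ volume := gaussianReal_absolutelyContinuous 0 one_ne_zero
  have hae : (fun x => (((gaussianReal μ 1).rnDeriv (gaussianReal 0 1) x).toReal) ^ l)
      =ᵐ[gaussianReal 0 1] fun x => Real.exp (l * (μ * x - μ ^ 2 / 2)) := by
    filter_upwards [hVvol.ae_eq (rnDeriv_gauss_gauss μ)] with x hx
    rw [hx, mul_comm l, Real.exp_mul]
  have hint : ∫ x, (((gaussianReal μ 1).rnDeriv (gaussianReal 0 1) x).toReal) ^ l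
      ∂(gaussianReal 0 1) = Real.exp (l * (l - 1) * μ ^ 2 / 2) := by
    rw [integral_congr_ae hae]
    have hV : gaussianReal 0 1
        = volume.withDensity (fun x => ((gaussianPDFReal 0 1 x).toNNReal : ℝ≥0∞)) :=
      gaussianReal_of_var_ne_zero 0 one_ne_zero
    rw [hV, integral_withDensity_eq_integral_smul
      ((measurable_gaussianPDFReal 0 1).real_toNNReal) _]
    have key : ∀ x : ℝ, (gaussianPDFReal 0 1 x).toNNReal • Real.exp (l * (μ * x - μ ^ 2 / 2))
        = Real.exp (l * (l - 1) * μ ^ 2 / 2) * gaussianPDFReal (l * μ) 1 x := by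
      intro x
      rw [NNReal.smul_def, Real.coe_toNNReal _ (gaussianPDFReal_nonneg 0 1 x)]
      simp only [gaussianPDFReal, NNReal.coe_one, mul_one, sub_zero, smul_eq_mul]
      rw [mul_assoc, ← Real.exp_add]
      have h : Real.exp (-x ^ 2 / 2 + l * (μ * x - μ ^ 2 / 2))
          = Real.exp (l * (l - 1) * μ ^ 2 / 2) * Real.exp (-(x - l * μ) ^ 2 / 2) := by
        rw [← Real.exp_add]; congr 1; ring
      rw [h]; ring
    rw [integral_congr_ae (ae_of_all _ key), integral_const_mul,
      integral_gaussianPDFReal_eq_one (l * μ) one_ne_zero, mul_one]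
  rw [renyiDiv, hint, Real.log_exp]
  have h1 : l - 1 ≠ 0 := by linarith
  field_simp
end

section
/- Let Φ be the standard normal CDF and μ > 0. Define f(α) = Φ(Φ⁻¹(1-α) - μ) on (0,1). Then f is convex and strictly decreasing, f is differentiable with f'(α) = -exp(μ Φ⁻¹(1-α) - μ²/2), and for every λ > 1, (1/(λ-1)) log ∫₀¹ |f'(α)|^{1-λ} dα = ½ μ² λ. -/
open MeasureTheory ProbabilityTheory Set Real

noncomputable def stdNormalCDF (x : ℝ) : ℝ := (gaussianReal 0 1 (Iic x)).toReal

noncomputable def stdNormalCDFInv : ℝ → ℝ := Function.invFun stdNormalCDF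

namespace GDPAux

open Filter Topology

noncomputable def phi (x : ℝ) : ℝ := (Real.sqrt (2 * π))⁻¹ * Real.exp (-x ^ 2 / 2)

lemma phi_eq_pdf : phi = gaussianPDFReal 0 1 := by
  funext x
  simp [phi, gaussianPDFReal]

lemma phi_pos (x : ℝ) : 0 < phi x := by
  unfold phi
  positivity

lemma continuous_phi : Continuous phi := by
  unfold phi
  fun_prop

lemma integrable_phi : Integrable phi := phi_eq_pdf ▸ integrable_gaussianPDFReal 0 1

lemma stdNormalCDF_eq (x : ℝ) : stdNormalCDF x = ∫ t in Iic x, phi t := by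
  rw [stdNormalCDF, gaussianReal_apply_eq_integral 0 one_ne_zero,
    ENNReal.toReal_ofReal (integral_nonneg fun t => gaussianPDFReal_nonneg 0 1 t), phi_eq_pdf]

lemma cdf_sub_cdf (x y : ℝ) : stdNormalCDF y - stdNormalCDF x = ∫ t in x..y, phi t := by
  rw [stdNormalCDF_eq, stdNormalCDF_eq]
  exact intervalIntegral.integral_Iic_sub_Iic integrable_phi.integrableOn integrable_phi.integrableOn

lemma hasDerivAt_cdf (x : ℝ) : HasDerivAt stdNormalCDF (phi x) x := by
  have hfun : stdNormalCDF = fun y => stdNormalCDF 0 + ∫ t in (0:ℝ)..y, phi t := by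
    funext y
    rw [← cdf_sub_cdf 0 y]
    ring
  rw [hfun]
  have hI : IntervalIntegrable phi volume 0 x := integrable_phi.intervalIntegrable
  exact (intervalIntegral.integral_hasDerivAt_right hI
      continuous_phi.stronglyMeasurable.stronglyMeasurableAtFilter
      continuous_phi.continuousAt).const_add (stdNormalCDF 0)

lemma cdf_strictMono : StrictMono stdNormalCDF := by
  intro x y hxy
  have h := intervalIntegral.intervalIntegral_pos_of_pos integrable_phi.intervalIntegrable phi_pos hxy
  have h2 := cdf_sub_cdf x y
  linarith

lemma cdf_nonneg (x : ℝ) : 0 ≤ stdNormalCDF x := ENNReal.toReal_nonneg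

lemma cdf_le_one (x : ℝ) : stdNormalCDF x ≤ 1 := by
  rw [stdNormalCDF]
  have h : gaussianReal 0 1 (Iic x) ≤ 1 := prob_le_one
  exact ENNReal.toReal_le_of_le_ofReal zero_le_one (by simpa using h)

lemma cdf_pos (x : ℝ) : 0 < stdNormalCDF x :=
  (cdf_nonneg (x - 1)).trans_lt (cdf_strictMono (sub_one_lt x))

lemma cdf_lt_one (x : ℝ) : stdNormalCDF x < 1 :=
  (cdf_strictMono (lt_add_one x)).trans_le (cdf_le_one (x + 1))

lemma tendsto_cdf_atTop : Tendsto stdNormalCDF atTop (𝓝 1) := by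
  have h := tendsto_measure_Iic_atTop (gaussianReal 0 1)
  rw [measure_univ] at h
  have h2 := (ENNReal.tendsto_toReal (a := 1) (by simp)).comp h
  exact h2

lemma exists_cdf_lt {y : ℝ} (hy : 0 < y) : ∃ a : ℝ, stdNormalCDF a < y := by
  have hmeas : ∀ n : ℕ, NullMeasurableSet (Iic (-(n : ℝ))) (gaussianReal 0 1) :=
    fun n => measurableSet_Iic.nullMeasurableSet
  have hanti : Antitone fun n : ℕ => Iic (-(n : ℝ)) := fun m n h =>
    Iic_subset_Iic.2 (neg_le_neg (by exact_mod_cast h))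
  have hint : ⋂ n : ℕ, Iic (-(n : ℝ)) = ∅ := by
    ext x
    simp only [mem_iInter, mem_Iic, mem_empty_iff_false, iff_false, not_forall]
    obtain ⟨n, hn⟩ := exists_nat_gt (-x)
    exact ⟨n, by linarith⟩
  have h := tendsto_measure_iInter_atTop hmeas hanti ⟨0, measure_ne_top _ _⟩
  rw [hint, measure_empty] at h
  have h2 := (ENNReal.tendsto_toReal (a := 0) (by simp)).comp h
  simp only [ENNReal.toReal_zero] at h2
  have h3 : Tendsto (fun n : ℕ => stdNormalCDF (-(n : ℝ))) atTop (𝓝 0) := h2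
  obtain ⟨n, hn⟩ := (h3.eventually_lt_const hy).exists
  exact ⟨-(n : ℝ), hn⟩

lemma range_cdf : range stdNormalCDF = Ioo 0 1 := by
  apply Subset.antisymm
  · rintro _ ⟨x, rfl⟩
    exact ⟨cdf_pos x, cdf_lt_one x⟩
  · rintro y ⟨h0, h1⟩
    obtain ⟨a, ha⟩ := exists_cdf_lt h0
    obtain ⟨b, hb⟩ := (tendsto_cdf_atTop.eventually_const_lt h1).exists
    have hab : a ≤ b := by
      by_contra hc
      push_neg at hc
      exact absurd (cdf_strictMono hc) (by linarith)
    have hy : y ∈ Ioo (stdNormalCDF a) (stdNormalCDF b) := ⟨ha, hb⟩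
    have hcont : Continuous stdNormalCDF :=
      continuous_iff_continuousAt.2 fun x => (hasDerivAt_cdf x).continuousAt
    obtain ⟨x, _, hx⟩ := intermediate_value_Ioo hab hcont.continuousOn hy
    exact ⟨x, hx⟩

lemma cdf_injective : Function.Injective stdNormalCDF := cdf_strictMono.injective

lemma inv_cdf (x : ℝ) : stdNormalCDFInv (stdNormalCDF x) = x :=
  Function.leftInverse_invFun cdf_injective x

lemma cdf_inv {y : ℝ} (hy : y ∈ Ioo (0:ℝ) 1) : stdNormalCDF (stdNormalCDFInv y) = y :=
  Function.invFun_eq (by rw [← range_cdf] at hy; exact hy)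

lemma invCDF_strictMonoOn : StrictMonoOn stdNormalCDFInv (Ioo (0:ℝ) 1) := by
  intro a ha b hb hab
  by_contra h
  push_neg at h
  have h2 := cdf_strictMono.monotone h
  rw [cdf_inv hb, cdf_inv ha] at h2
  linarith

lemma image_invCDF : stdNormalCDFInv '' Ioo (0:ℝ) 1 = univ := by
  ext x
  simp only [mem_univ, iff_true]
  exact ⟨stdNormalCDF x, ⟨cdf_pos x, cdf_lt_one x⟩, inv_cdf x⟩

lemma continuousAt_invCDF {y : ℝ} (hy : y ∈ Ioo (0:ℝ) 1) : ContinuousAt stdNormalCDFInv y :=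
  invCDF_strictMonoOn.continuousAt_of_image_mem_nhds (isOpen_Ioo.mem_nhds hy)
    (by rw [image_invCDF]; exact univ_mem)

lemma hasDerivAt_invCDF {y : ℝ} (hy : y ∈ Ioo (0:ℝ) 1) :
    HasDerivAt stdNormalCDFInv (phi (stdNormalCDFInv y))⁻¹ y :=
  (hasDerivAt_cdf (stdNormalCDFInv y)).of_local_left_inverse (continuousAt_invCDF hy)
    (phi_pos _).ne'
    (Filter.eventually_of_mem (isOpen_Ioo.mem_nhds hy) fun _z hz => cdf_inv hz)

lemma hasDerivAt_tradeoff (μ : ℝ) {α : ℝ} (hα : α ∈ Ioo (0:ℝ) 1) :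
    HasDerivAt (fun α => stdNormalCDF (stdNormalCDFInv (1 - α) - μ))
      (-Real.exp (μ * stdNormalCDFInv (1 - α) - μ ^ 2 / 2)) α := by
  have h1 : (1:ℝ) - α ∈ Ioo (0:ℝ) 1 := ⟨by linarith [hα.2], by linarith [hα.1]⟩
  have hin : HasDerivAt (fun α : ℝ => (1:ℝ) - α) (-1) α := by
    simpa using (hasDerivAt_id α).const_sub 1
  have hmid := ((hasDerivAt_invCDF h1).comp α hin).sub_const μ
  have hout := (hasDerivAt_cdf (stdNormalCDFInv (1 - α) - μ)).comp α hmid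
  refine HasDerivAt.congr_deriv hout ?_
  set u := stdNormalCDFInv (1 - α) with hu
  have hs : Real.sqrt (2 * π) ≠ 0 := (Real.sqrt_pos.2 (by positivity)).ne'
  have key : phi (u - μ) * ((phi u)⁻¹ * -1) = -Real.exp (μ * u - μ ^ 2 / 2) := by
    have : phi (u - μ) * ((phi u)⁻¹ * -1) = -(phi (u - μ) / phi u) := by ring
    rw [this]
    unfold phi
    rw [mul_div_mul_left _ _ (inv_ne_zero hs), ← Real.exp_sub]
    congr 2
    ring
  rw [key]

end GDPAux

/-- Properties of the `μ`-GDP trade-off curve `f(α) = Φ(Φ⁻¹(1-α) - μ)`: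
it is convex and strictly decreasing on `(0,1)`, differentiable with
`f'(α) = -exp(μΦ⁻¹(1-α) - μ²/2)`, and its Rényi functional equals `½μ²λ`. -/
theorem gdp_tradeoff_renyi_functional (μ : ℝ) (hμ : 0 < μ) :
    letI f : ℝ → ℝ := fun α => stdNormalCDF (stdNormalCDFInv (1 - α) - μ)
    StrictAntiOn f (Ioo (0:ℝ) 1) ∧
    ConvexOn ℝ (Ioo (0:ℝ) 1) f ∧
    (∀ α ∈ Ioo (0:ℝ) 1,
      HasDerivAt f (-Real.exp (μ * stdNormalCDFInv (1 - α) - μ ^ 2 / 2)) α) ∧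
    (∀ l : ℝ, 1 < l →
      (l - 1)⁻¹ * Real.log (∫ α in (0:ℝ)..1, |deriv f α| ^ (1 - l)) = μ ^ 2 * l / 2) := by
  set f : ℝ → ℝ := fun α => stdNormalCDF (stdNormalCDFInv (1 - α) - μ) with hf
  have hderiv : ∀ α ∈ Ioo (0:ℝ) 1,
      HasDerivAt f (-Real.exp (μ * stdNormalCDFInv (1 - α) - μ ^ 2 / 2)) α :=
    fun α hα => GDPAux.hasDerivAt_tradeoff μ hα
  have h1mem : ∀ {α : ℝ}, α ∈ Ioo (0:ℝ) 1 → (1 - α) ∈ Ioo (0:ℝ) 1 := by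
    rintro α ⟨h0, h1⟩; exact ⟨by linarith, by linarith⟩
  refine ⟨?_, ?_, hderiv, ?_⟩
  · -- strict anti
    intro a ha b hb hab
    have h := GDPAux.invCDF_strictMonoOn (h1mem hb) (h1mem ha) (by linarith)
    exact GDPAux.cdf_strictMono (by linarith)
  · -- convex
    refine MonotoneOn.convexOn_of_deriv (convex_Ioo 0 1)
      (fun α hα => (hderiv α hα).continuousAt.continuousWithinAt) ?_ ?_
    · rw [interior_Ioo]
      exact fun α hα => (hderiv α hα).differentiableAt.differentiableWithinAt
    · rw [interior_Ioo]
      intro a ha b hb hab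
      rw [(hderiv a ha).deriv, (hderiv b hb).deriv]
      have hle : stdNormalCDFInv (1 - b) ≤ stdNormalCDFInv (1 - a) := by
        rcases eq_or_lt_of_le hab with rfl | h
        · exact le_rfl
        · exact (GDPAux.invCDF_strictMonoOn (h1mem hb) (h1mem ha) (by linarith)).le
      have := Real.exp_le_exp.2
        (show μ * stdNormalCDFInv (1 - b) - μ ^ 2 / 2 ≤ μ * stdNormalCDFInv (1 - a) - μ ^ 2 / 2 by
          nlinarith)
      linarith
  · -- integral
    intro l hl
    set E : ℝ → ℝ := fun y => Real.exp ((1 - l) * (μ * stdNormalCDFInv (1 - y) - μ ^ 2 / 2))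
      with hE
    have hstep1 : (∫ α in (0:ℝ)..1, |deriv f α| ^ (1 - l)) = ∫ α in Ioo (0:ℝ) 1, E α := by
      rw [intervalIntegral.integral_of_le zero_le_one, MeasureTheory.integral_Ioc_eq_integral_Ioo]
      refine setIntegral_congr_fun measurableSet_Ioo fun α hα => ?_
      rw [(hderiv α hα).deriv, abs_neg, abs_of_pos (Real.exp_pos _),
        Real.rpow_def_of_pos (Real.exp_pos _), Real.log_exp]
      simp only [hE]
      congr 1
      ring
    have hstep2 : (∫ α in Ioo (0:ℝ) 1, E α)
        = ∫ x : ℝ, GDPAux.phi x * Real.exp ((1 - l) * (μ * x - μ ^ 2 / 2)) := by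
      have himg : (fun u => 1 - stdNormalCDF u) '' univ = Ioo (0:ℝ) 1 := by
        rw [image_univ]
        ext y
        constructor
        · rintro ⟨x, rfl⟩
          dsimp only
          exact ⟨by linarith [GDPAux.cdf_lt_one x], by linarith [GDPAux.cdf_pos x]⟩
        · rintro ⟨h0, h1⟩
          have hy : 1 - y ∈ Ioo (0:ℝ) 1 := ⟨by linarith, by linarith⟩
          rw [← GDPAux.range_cdf] at hy
          obtain ⟨x, hx⟩ := hy
          refine ⟨x, ?_⟩
          dsimp only
          linarith
      have hCoV := MeasureTheory.integral_image_eq_integral_abs_deriv_smul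
        (f := fun u => 1 - stdNormalCDF u) (f' := fun u => -GDPAux.phi u)
        MeasurableSet.univ
        (fun x _ => (((GDPAux.hasDerivAt_cdf x).const_sub 1)).hasDerivWithinAt)
        (fun a _ b _ hab => GDPAux.cdf_injective (by dsimp only at hab; linarith)) E
      rw [himg] at hCoV
      rw [hCoV, MeasureTheory.setIntegral_univ]
      refine integral_congr_ae (Filter.Eventually.of_forall fun x => ?_)
      simp only [hE, smul_eq_mul, abs_neg, abs_of_pos (GDPAux.phi_pos x), sub_sub_cancel,
        GDPAux.inv_cdf]
    have hstep3 : (∫ x : ℝ, GDPAux.phi x * Real.exp ((1 - l) * (μ * x - μ ^ 2 / 2)))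
        = Real.exp (μ ^ 2 * l * (l - 1) / 2) := by
      set c : ℝ := (1 - l) * μ with hc
      have hptw : ∀ x : ℝ, GDPAux.phi x * Real.exp ((1 - l) * (μ * x - μ ^ 2 / 2))
          = Real.exp (μ ^ 2 * l * (l - 1) / 2) * gaussianPDFReal c 1 x := by
        intro x
        unfold GDPAux.phi gaussianPDFReal
        push_cast
        rw [mul_one, mul_assoc, ← Real.exp_add, mul_comm (Real.exp _),
          mul_assoc, ← Real.exp_add]
        congr 1
        rw [hc]
        ring
      rw [integral_congr_ae (Filter.Eventually.of_forall hptw),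
        MeasureTheory.integral_const_mul, integral_gaussianPDFReal_eq_one c one_ne_zero, mul_one]
    rw [hstep1, hstep2, hstep3, Real.log_exp]
    have hne : l - 1 ≠ 0 := by linarith
    field_simp
end
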